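/- arXiv:2310.07373 — 2 statements merged into one kernel-verified Lean document; each statement's English description precedes it below -/
import Mathlib

section
/- Let ν ∈ (0,1], K ≥ 0, λ > 0 and C ≥ 1. Let I ⊆ ℝ be an interval and let g₁, …, g_n : ℝ → ℝ be C¹ maps with everywhere positive derivative such that |log g_k′(u) − log g_k′(w)| ≤ K·|u − w|^ν for all u, w ∈ ℝ and all 1 ≤ k ≤ n, and such that the partial compositions G_k = g_k ∘ g_{k−1} ∘ … ∘ g₁ satisfy |G_k(x) − G_k(y)| ≤ C·e^{−λk}·|x − y| for all x, y ∈ I and all 1 ≤ k ≤ n. Then, setting κ = K·(1 + C^ν/(1 − e^{−νλ})), one has |log G_n′(x) − log G_n′(y)| ≤ κ·|x − y|^ν for all x, y ∈ I; in particular the bound is independent of n. -/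
open Set Filter

/-- **Uniform distortion estimate for compositions of expanding/contracting `C^{1+ν}` maps**
(the inductive claim of Lemma `controlC` of the paper).  If each `g k` (`1 ≤ k ≤ n`) is a
`C¹` map of the line with positive derivative whose log-derivative is `(K,ν)`-Hölder, and the
partial compositions `G k = g k ∘ ⋯ ∘ g 1` contract distances on an interval `I` at
exponential rate `C e^{-λ k}`, then the log-derivative of `G n` is `κ`-Hölder on `I` with
`κ = K (1 + C^ν / (1 - e^{-νλ}))`, independently of `n`. -/
theorem stmt_2 (ν K lam C : ℝ) (hν0 : 0 < ν) (hν1 : ν ≤ 1) (hK : 0 ≤ K) (hlam : 0 < lam)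
    (hC : 1 ≤ C) (I : Set ℝ) (hI : I.OrdConnected) (n : ℕ)
    (g g' : ℕ → ℝ → ℝ) (G : ℕ → ℝ → ℝ)
    (hderiv : ∀ k, 1 ≤ k → k ≤ n → ∀ u : ℝ, HasDerivAt (g k) (g' k u) u)
    (hpos : ∀ k, 1 ≤ k → k ≤ n → ∀ u : ℝ, 0 < g' k u)
    (hHolder : ∀ k, 1 ≤ k → k ≤ n → ∀ u w : ℝ,
      |Real.log (g' k u) - Real.log (g' k w)| ≤ K * |u - w| ^ ν)
    (hG0 : G 0 = id)
    (hGsucc : ∀ k < n, G (k + 1) = g (k + 1) ∘ G k)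
    (hcontract : ∀ k, 1 ≤ k → k ≤ n → ∀ x ∈ I, ∀ y ∈ I,
      |G k x - G k y| ≤ C * Real.exp (-lam * k) * |x - y|) :
    ∀ x ∈ I, ∀ y ∈ I,
      |Real.log (deriv (G n) x) - Real.log (deriv (G n) y)| ≤
        (K * (1 + C ^ ν / (1 - Real.exp (-(ν * lam))))) * |x - y| ^ ν := by
  intro x hx y hy
  set r : ℝ := Real.exp (-(ν * lam)) with hr
  have hr0 : 0 < r := Real.exp_pos _
  have hr1 : r < 1 := by
    rw [hr, Real.exp_lt_one_iff]
    exact neg_neg_iff_pos.mpr (mul_pos hν0 hlam)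
  have h1r : 0 < 1 - r := by linarith
  have hC0 : (0:ℝ) < C := lt_of_lt_of_le zero_lt_one hC
  -- derivative formula
  have hGd : ∀ k, k ≤ n → ∀ z : ℝ,
      HasDerivAt (G k) (∏ j ∈ Finset.range k, g' (j+1) (G j z)) z := by
    intro k
    induction k with
    | zero => intro _ z; simpa [hG0] using (hasDerivAt_id z)
    | succ k ih =>
      intro hk z
      have hk' : k < n := hk
      have h1 := ih (le_of_lt hk') z
      have h2 := hderiv (k+1) (Nat.le_add_left 1 k) hk (G k z)
      have h3 := h2.comp z h1
      rw [hGsucc k hk', Finset.prod_range_succ, mul_comm]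
      exact h3
  have hlogd : ∀ z : ℝ, Real.log (deriv (G n) z) =
      ∑ j ∈ Finset.range n, Real.log (g' (j+1) (G j z)) := by
    intro z
    rw [(hGd n le_rfl z).deriv, Real.log_prod]
    intro j hj
    exact ne_of_gt (hpos (j+1) (Nat.le_add_left 1 j)
      (Nat.succ_le_of_lt (Finset.mem_range.mp hj)) _)
  rw [hlogd x, hlogd y, ← Finset.sum_sub_distrib]
  have habs := Finset.abs_sum_le_sum_abs
    (fun j => Real.log (g' (j+1) (G j x)) - Real.log (g' (j+1) (G j y))) (Finset.range n)
  refine habs.trans ?_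
  have ht0 : (0:ℝ) ≤ |x - y| ^ ν := Real.rpow_nonneg (abs_nonneg _) _
  have hCν : (1:ℝ) ≤ C ^ ν := Real.one_le_rpow hC (le_of_lt hν0)
  -- termwise bound
  have hterm : ∀ j ∈ Finset.range n,
      |Real.log (g' (j+1) (G j x)) - Real.log (g' (j+1) (G j y))| ≤
        K * C ^ ν * r ^ j * |x - y| ^ ν := by
    intro j hj
    have hjn : j < n := Finset.mem_range.mp hj
    have hH := hHolder (j+1) (Nat.le_add_left 1 j) (Nat.succ_le_of_lt hjn) (G j x) (G j y)
    refine hH.trans ?_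
    rcases Nat.eq_zero_or_pos j with h0 | hjpos
    · subst h0
      simp only [hG0, id_eq, pow_zero, mul_one]
      nlinarith [mul_nonneg hK ht0]
    · have hcj := hcontract j hjpos (le_of_lt hjn) x hx y hy
      have hGabs : |G j x - G j y| ^ ν ≤ (C * Real.exp (-lam * j) * |x - y|) ^ ν :=
        Real.rpow_le_rpow (abs_nonneg _) hcj (le_of_lt hν0)
      have hexp : (Real.exp (-lam * j)) ^ ν = r ^ j := by
        rw [← Real.exp_mul, hr, ← Real.exp_nat_mul]
        ring_nf
      have hpow : (C * Real.exp (-lam * j) * |x - y|) ^ ν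
          = C ^ ν * r ^ j * |x - y| ^ ν := by
        rw [Real.mul_rpow (by positivity) (abs_nonneg _),
            Real.mul_rpow hC0.le (Real.exp_pos _).le, hexp]
      have := mul_le_mul_of_nonneg_left (hGabs.trans_eq hpow) hK
      linarith [this]
  have hsum := Finset.sum_le_sum hterm
  refine hsum.trans ?_
  have hgeom : ∑ j ∈ Finset.range n, r ^ j ≤ 1 / (1 - r) := by
    rw [geom_sum_eq hr1.ne n, ← neg_div_neg_eq]
    have : -(r ^ n - 1) = 1 - r ^ n := by ring
    rw [this, show -(r - 1) = 1 - r by ring, div_le_div_iff₀ h1r h1r]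
    nlinarith [pow_nonneg hr0.le n]
  calc ∑ j ∈ Finset.range n, K * C ^ ν * r ^ j * |x - y| ^ ν
      = (K * C ^ ν * |x - y| ^ ν) * ∑ j ∈ Finset.range n, r ^ j := by
        rw [Finset.mul_sum]; exact Finset.sum_congr rfl fun j _ => by ring
    _ ≤ (K * C ^ ν * |x - y| ^ ν) * (1 / (1 - r)) := by
        apply mul_le_mul_of_nonneg_left hgeom
        positivity
    _ ≤ (K * (1 + C ^ ν / (1 - r))) * |x - y| ^ ν := by
        have e : (K * (1 + C ^ ν / (1 - r))) * |x - y| ^ ν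
            = K * |x - y| ^ ν + (K * C ^ ν * |x - y| ^ ν) * (1 / (1 - r)) := by ring
        rw [e]
        nlinarith [mul_nonneg hK ht0]
end

section
/- For every α ∈ (0,1] there exists a constant C > 0 with the following property. Let E be a finite-dimensional real inner product space, let A : E → E be an invertible linear map, let u ∈ E be a unit eigenvector of A*A for the eigenvalue ‖A‖² (a top singular direction), and set σ₂(A) = ‖A ∘ P‖, where P is the orthogonal projection of E onto the hyperplane u^⊥. Then for all unit vectors v₁, v₂ ∈ E with ⟨v₁, u⟩ ≥ α and ⟨v₂, u⟩ ≥ α one has ‖Av₁/‖Av₁‖ − Av₂/‖Av₂‖‖ ≤ C·(σ₂(A)/‖A‖)·‖v₁ − v₂‖. -/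
open RealInnerProductSpace

lemma aux_normalize_sub {E : Type*} [NormedAddCommGroup E] [NormedSpace ℝ E]
    (x y : E) (hx : x ≠ 0) (hy : y ≠ 0) :
    ‖‖x‖⁻¹ • x - ‖y‖⁻¹ • y‖ ≤ 2 * ‖x - y‖ / ‖x‖ := by
  have hx' : (0:ℝ) < ‖x‖ := norm_pos_iff.mpr hx
  have hy' : (0:ℝ) < ‖y‖ := norm_pos_iff.mpr hy
  have key : |‖x‖⁻¹ - ‖y‖⁻¹| * ‖y‖ ≤ ‖x‖⁻¹ * ‖x - y‖ := by
    have h1 : ‖x‖⁻¹ - ‖y‖⁻¹ = (‖y‖ - ‖x‖) / (‖x‖ * ‖y‖) := by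
      field_simp
    have h2 : |‖y‖ - ‖x‖| ≤ ‖x - y‖ := by
      rw [abs_sub_comm]; exact abs_norm_sub_norm_le x y
    have h3 : |‖x‖⁻¹ - ‖y‖⁻¹| * ‖y‖ = |‖y‖ - ‖x‖| / ‖x‖ := by
      rw [h1, abs_div, abs_of_pos (by positivity : (0:ℝ) < ‖x‖ * ‖y‖)]
      field_simp
    rw [h3, div_eq_inv_mul]
    exact mul_le_mul_of_nonneg_left h2 (by positivity)
  calc ‖‖x‖⁻¹ • x - ‖y‖⁻¹ • y‖
      = ‖(‖x‖⁻¹ • x - ‖x‖⁻¹ • y) + (‖x‖⁻¹ • y - ‖y‖⁻¹ • y)‖ := by rw [sub_add_sub_cancel]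
    _ ≤ ‖‖x‖⁻¹ • x - ‖x‖⁻¹ • y‖ + ‖‖x‖⁻¹ • y - ‖y‖⁻¹ • y‖ := norm_add_le _ _
    _ = ‖x‖⁻¹ * ‖x - y‖ + |‖x‖⁻¹ - ‖y‖⁻¹| * ‖y‖ := by
        rw [← smul_sub, ← sub_smul, norm_smul, norm_smul, Real.norm_eq_abs,
          Real.norm_eq_abs, abs_of_pos (by positivity : (0:ℝ) < ‖x‖⁻¹)]
    _ ≤ ‖x‖⁻¹ * ‖x - y‖ + ‖x‖⁻¹ * ‖x - y‖ := by linarith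
    _ = 2 * ‖x - y‖ / ‖x‖ := by field_simp; ring

lemma aux_scale {E : Type*} [NormedAddCommGroup E] [NormedSpace ℝ E]
    (c : ℝ) (hc : 0 < c) (x : E) :
    ‖c • x‖⁻¹ • (c • x) = ‖x‖⁻¹ • x := by
  rcases eq_or_ne x 0 with rfl | hx
  · simp
  rw [norm_smul, Real.norm_eq_abs, abs_of_pos hc, mul_inv, smul_smul,
    mul_comm c⁻¹, mul_assoc, inv_mul_cancel₀ hc.ne', mul_one]

set_option maxHeartbeats 1000000 in
/-- **Uniform contraction on directions transverse to the repelling hyperplane**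
(the linear-algebra estimate behind Proposition `Lipschitz-compatibleB` of the paper).
For every `α ∈ (0,1]` there is a constant `C > 0` such that for every invertible linear
map `A` of a finite dimensional real inner product space, every top singular direction `u`
of `A` (a unit eigenvector of `A*A` for the eigenvalue `‖A‖²`), and all unit vectors
`v₁, v₂` with `⟨vᵢ, u⟩ ≥ α`, the projectivized images satisfy
`‖Av₁/‖Av₁‖ − Av₂/‖Av₂‖‖ ≤ C (σ₂(A)/‖A‖) ‖v₁ − v₂‖`, where `σ₂(A) = ‖A ∘ P‖` and `P` is
the orthogonal projection onto the hyperplane `u^⊥`. -/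
theorem stmt_6 (α : ℝ) (hα0 : 0 < α) (hα1 : α ≤ 1) :
    ∃ C : ℝ, 0 < C ∧
      ∀ (E : Type u) (_ : NormedAddCommGroup E), ∀ (_ : InnerProductSpace ℝ E)
        (_ : FiniteDimensional ℝ E) (A : E →L[ℝ] E), Function.Bijective A →
        ∀ u : E, ‖u‖ = 1 → ContinuousLinearMap.adjoint A (A u) = (‖A‖ ^ 2 : ℝ) • u →
        ∀ v₁ v₂ : E, ‖v₁‖ = 1 → ‖v₂‖ = 1 →
          α ≤ (inner ℝ v₁ u : ℝ) → α ≤ (inner ℝ v₂ u : ℝ) →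
          ‖‖A v₁‖⁻¹ • A v₁ - ‖A v₂‖⁻¹ • A v₂‖ ≤
            C * (‖A ∘L ((ℝ ∙ u)ᗮ.subtypeL ∘L Submodule.orthogonalProjectionOnto (ℝ ∙ u)ᗮ)‖ / ‖A‖) *
              ‖v₁ - v₂‖ := by
  refine ⟨4 / α ^ 2, by positivity, ?_⟩
  intro E _ _ _ A hbij u hu hadj v₁ v₂ hv₁ hv₂ h₁ h₂
  set Q : E →L[ℝ] E := (ℝ ∙ u)ᗮ.subtypeL ∘L Submodule.orthogonalProjectionOnto (ℝ ∙ u)ᗮ with hQdef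
  set σ : ℝ := ‖A ∘L Q‖ with hσdef
  have hσ0 : 0 ≤ σ := norm_nonneg _
  -- basic facts about u and A
  have hu0 : u ≠ 0 := by intro h; rw [h, norm_zero] at hu; norm_num at hu
  have hQu : ∀ v : E, (inner ℝ u (Q v) : ℝ) = 0 := by
    intro v
    have hmem : Q v ∈ (ℝ ∙ u)ᗮ := by
      simp only [hQdef, ContinuousLinearMap.comp_apply, Submodule.subtypeL_apply]
      exact SetLike.coe_mem _
    exact (Submodule.mem_orthogonal _ _).1 hmem u (Submodule.mem_span_singleton_self u)
  have hdec : ∀ v : E, v = (inner ℝ v u : ℝ) • u + Q v := by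
    intro v
    have h := Submodule.starProjection_add_starProjection_orthogonal (K := ℝ ∙ u) v
    rw [Submodule.starProjection_unit_singleton ℝ hu v] at h
    have hq : Q v = (ℝ ∙ u)ᗮ.starProjection v := rfl
    rw [real_inner_comm v u] at h
    rw [hq]
    exact h.symm
  have hAuAQ : ∀ v : E, (inner ℝ (A u) (A (Q v)) : ℝ) = 0 := by
    intro v
    have h := ContinuousLinearMap.adjoint_inner_left A (Q v) (A u)
    rw [hadj, real_inner_smul_left, hQu v, mul_zero] at h
    exact h.symm
  have hAu : ‖A u‖ = ‖A‖ := by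
    have h := ContinuousLinearMap.adjoint_inner_left A u (A u)
    rw [hadj, real_inner_smul_left, real_inner_self_eq_norm_sq, hu,
      real_inner_self_eq_norm_sq] at h
    have h3 : (‖A u‖ - ‖A‖) * (‖A u‖ + ‖A‖) = 0 := by nlinarith
    rcases mul_eq_zero.1 h3 with h4 | h4
    · linarith
    · have := norm_nonneg (A u); have := norm_nonneg A; linarith
  have hA0 : (0:ℝ) < ‖A‖ := by
    have hAu0 : A u ≠ 0 := fun h => hu0 (hbij.injective (by rw [h, map_zero]))
    rw [← hAu]; exact norm_pos_iff.mpr hAu0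
  -- the four scalars
  set t₁ : ℝ := inner ℝ v₁ u with ht₁
  set t₂ : ℝ := inner ℝ v₂ u with ht₂
  have ht₁0 : 0 < t₁ := lt_of_lt_of_le hα0 h₁
  have ht₂0 : 0 < t₂ := lt_of_lt_of_le hα0 h₂
  set s₁ : ℝ := t₁ * ‖A‖ with hs₁def
  set s₂ : ℝ := t₂ * ‖A‖ with hs₂def
  have hs₁0 : 0 < s₁ := mul_pos ht₁0 hA0
  have hs₂0 : 0 < s₂ := mul_pos ht₂0 hA0
  -- unit direction e and transverse parts
  set e : E := ‖A‖⁻¹ • A u with hedef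
  set z₁ : E := s₁⁻¹ • A (Q v₁) with hz₁def
  set z₂ : E := s₂⁻¹ • A (Q v₂) with hz₂def
  have he : ‖e‖ = 1 := by
    rw [hedef, norm_smul, Real.norm_eq_abs, abs_of_pos (by positivity), hAu,
      inv_mul_cancel₀ hA0.ne']
  have hez : ∀ (s : ℝ) (v : E), (inner ℝ e (s⁻¹ • A (Q v)) : ℝ) = 0 := by
    intro s v
    rw [hedef, real_inner_smul_left, real_inner_smul_right, hAuAQ v]
    ring
  have hw1 : (1:ℝ) ≤ ‖e + z₁‖ := by
    have hp := norm_add_sq_real e z₁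
    rw [hez s₁ v₁, he] at hp
    nlinarith [norm_nonneg (e + z₁), sq_nonneg ‖z₁‖]
  have hw2 : (1:ℝ) ≤ ‖e + z₂‖ := by
    have hp := norm_add_sq_real e z₂
    rw [hez s₂ v₂, he] at hp
    nlinarith [norm_nonneg (e + z₂), sq_nonneg ‖z₂‖]
  -- A vᵢ = sᵢ • (e + zᵢ)
  have hAv : ∀ (v : E) (t s : ℝ), t = inner ℝ v u → s = t * ‖A‖ → 0 < s →
      A v = s • (e + s⁻¹ • A (Q v)) := by
    intro v t s ht hs hspos
    have hv' : A v = t • A u + A (Q v) := by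
      conv_lhs => rw [hdec v]
      rw [map_add, map_smul, ht]
    rw [hv', smul_add, hedef, smul_smul, smul_smul,
      mul_inv_cancel₀ hspos.ne', one_smul]
    congr 1
    rw [hs, mul_assoc, mul_inv_cancel₀ hA0.ne', mul_one]
  -- normalized images
  have hAv₁ : A v₁ = s₁ • (e + z₁) := hAv v₁ t₁ s₁ ht₁ hs₁def hs₁0
  have hAv₂ : A v₂ = s₂ • (e + z₂) := hAv v₂ t₂ s₂ ht₂ hs₂def hs₂0
  have hnorm₁ : ‖A v₁‖⁻¹ • A v₁ = ‖e + z₁‖⁻¹ • (e + z₁) := by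
    rw [hAv₁]; exact aux_scale s₁ hs₁0 _
  have hnorm₂ : ‖A v₂‖⁻¹ • A v₂ = ‖e + z₂‖⁻¹ • (e + z₂) := by
    rw [hAv₂]; exact aux_scale s₂ hs₂0 _
  have hne₁ : e + z₁ ≠ 0 := by
    intro h; rw [h, norm_zero] at hw1; linarith
  have hne₂ : e + z₂ ≠ 0 := by
    intro h; rw [h, norm_zero] at hw2; linarith
  set d : ℝ := ‖v₁ - v₂‖ with hddef
  have hd0 : 0 ≤ d := norm_nonneg _
  -- bound the difference of transverse parts
  have hΔ : ‖A (Q v₁) - A (Q v₂)‖ ≤ σ * d := by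
    have h : A (Q v₁) - A (Q v₂) = (A ∘L Q) (v₁ - v₂) := by
      simp [ContinuousLinearMap.comp_apply, map_sub]
    rw [h, hσdef, hddef]
    exact (A ∘L Q).le_opNorm _
  have hy₂ : ‖A (Q v₂)‖ ≤ σ := by
    have h := (A ∘L Q).le_opNorm v₂
    rw [hv₂, mul_one] at h
    exact h
  have hs₁inv : s₁⁻¹ ≤ (α * ‖A‖)⁻¹ := by
    apply inv_anti₀ (by positivity)
    rw [hs₁def]
    exact mul_le_mul_of_nonneg_right h₁ hA0.le
  have hts : |s₁⁻¹ - s₂⁻¹| ≤ d / (α ^ 2 * ‖A‖) := by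
    have habs : |t₂ - t₁| ≤ d := by
      have he1 : t₂ - t₁ = (inner ℝ (v₂ - v₁) u : ℝ) := by
        rw [inner_sub_left, ht₁, ht₂]
      rw [he1, hddef, norm_sub_rev]
      calc |(inner ℝ (v₂ - v₁) u : ℝ)| ≤ ‖v₂ - v₁‖ * ‖u‖ := abs_real_inner_le_norm _ _
        _ = ‖v₂ - v₁‖ := by rw [hu, mul_one]
    have heq : s₁⁻¹ - s₂⁻¹ = (t₂ - t₁) / (t₁ * t₂ * ‖A‖) := by
      rw [hs₁def, hs₂def]
      field_simp
    rw [heq, abs_div, abs_of_pos (by positivity : (0:ℝ) < t₁ * t₂ * ‖A‖)]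
    have hden : α ^ 2 * ‖A‖ ≤ t₁ * t₂ * ‖A‖ := by
      have h := mul_le_mul h₁ h₂ hα0.le ht₁0.le
      rw [pow_two]
      exact mul_le_mul_of_nonneg_right h hA0.le
    exact div_le_div₀ hd0 habs (by positivity) hden
  have hzdiff : z₁ - z₂ = s₁⁻¹ • (A (Q v₁) - A (Q v₂)) + (s₁⁻¹ - s₂⁻¹) • A (Q v₂) := by
    rw [hz₁def, hz₂def, smul_sub, sub_smul]
    abel
  have hzbound : ‖z₁ - z₂‖ ≤ 2 / α ^ 2 * (σ / ‖A‖) * d := by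
    calc ‖z₁ - z₂‖
        ≤ ‖s₁⁻¹ • (A (Q v₁) - A (Q v₂))‖ + ‖(s₁⁻¹ - s₂⁻¹) • A (Q v₂)‖ := by
          rw [hzdiff]; exact norm_add_le _ _
      _ = s₁⁻¹ * ‖A (Q v₁) - A (Q v₂)‖ + |s₁⁻¹ - s₂⁻¹| * ‖A (Q v₂)‖ := by
          rw [norm_smul, norm_smul, Real.norm_eq_abs, Real.norm_eq_abs,
            abs_of_pos (by positivity : (0:ℝ) < s₁⁻¹)]
      _ ≤ (α * ‖A‖)⁻¹ * (σ * d) + d / (α ^ 2 * ‖A‖) * σ :=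
          add_le_add
            (mul_le_mul hs₁inv hΔ (norm_nonneg _) (by positivity))
            (mul_le_mul hts hy₂ (norm_nonneg _) (by positivity))
      _ = (α * σ * d + σ * d) / (α ^ 2 * ‖A‖) := by
          field_simp
      _ ≤ (2 * σ * d) / (α ^ 2 * ‖A‖) := by
          gcongr
          nlinarith [mul_nonneg hσ0 hd0]
      _ = 2 / α ^ 2 * (σ / ‖A‖) * d := by
          field_simp
          try ring
  -- conclusion
  calc ‖‖A v₁‖⁻¹ • A v₁ - ‖A v₂‖⁻¹ • A v₂‖
      = ‖‖e + z₁‖⁻¹ • (e + z₁) - ‖e + z₂‖⁻¹ • (e + z₂)‖ := by rw [hnorm₁, hnorm₂]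
    _ ≤ 2 * ‖(e + z₁) - (e + z₂)‖ / ‖e + z₁‖ := aux_normalize_sub _ _ hne₁ hne₂
    _ ≤ 2 * ‖z₁ - z₂‖ := by
        have h : (e + z₁) - (e + z₂) = z₁ - z₂ := by abel
        rw [h]
        exact div_le_self (by positivity) hw1
    _ ≤ 2 * (2 / α ^ 2 * (σ / ‖A‖) * d) := by linarith
    _ = 4 / α ^ 2 * (σ / ‖A‖) * d := by ring
end
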